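/- Let m and M be invertible 2×2 matrices representing the deformed and reference edge matrices of a triangle, with F = m M⁻¹. For a differentiable energy density W, the derivative of E = det(G)·W(F G⁻¹)·(det M)/2 with respect to the deformed vertex positions satisfies: the force on vertex k from the triangle equals -(1/2)·σ·v⊥, where σ is the Cauchy stress σ = (det F_e)⁻¹ (∂W/∂F_e) F_eᵀ with F_e = F G⁻¹, and v⊥ is the 90°-counterclockwise rotation of the edge vector opposite vertex k in the deformed triangle. -/

import Mathlib

/-! The energy depends on `φᵏ` only through `F_e = (C - φᵏ 1ᵀ) B` with `B = M⁻¹ G⁻¹`, so its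
derivative in the direction `h` is `-(det G det M / 2) tr (Pᵀ h (Bᵀ 1)ᵀ) = -(det G det M / 2) h ⬝ P Bᵀ 1`.
On the other side the opposite edge is `m (-1, 1)ᵀ`, and the cofactor identity `mᵀ J m = (det m) J`
for the quarter turn `J` gives `σ J m e = (det B)⁻¹ P Bᵀ J e`: the deformed edge matrix cancels.
Since `J (-1, 1)ᵀ = -(1, 1)ᵀ` and `(det B)⁻¹ = det M det G`, the two sides agree. -/

open Matrix

attribute [local instance] Matrix.normedAddCommGroup Matrix.normedSpace

section Derivative

variable {𝕜 F : Type*} [NontriviallyNormedField 𝕜] [CompleteSpace 𝕜]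
  [NormedAddCommGroup F] [NormedSpace 𝕜 F] {n m : Type*} [Fintype n]

theorem Matrix.hasFDerivAt_vecMulVec_left (w : m → 𝕜) (x : n → 𝕜) :
    HasFDerivAt (fun y : n → 𝕜 => vecMulVec y w)
      (LinearMap.toContinuousLinearMap ((vecMulVecBilin 𝕜 𝕜).flip w)) x :=
  (LinearMap.toContinuousLinearMap ((vecMulVecBilin 𝕜 𝕜).flip w)).hasFDerivAt

theorem fderiv_comp_sub_vecMulVec [Fintype m] (W : Matrix n m 𝕜 → F) (A : Matrix n m 𝕜)
    (w : m → 𝕜) (x h : n → 𝕜) (hW : DifferentiableAt 𝕜 W (A - vecMulVec x w)) :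
    fderiv 𝕜 (fun y => W (A - vecMulVec y w)) x h
      = -fderiv 𝕜 W (A - vecMulVec x w) (vecMulVec h w) := by
  have hcomp := hW.hasFDerivAt.comp x ((hasFDerivAt_vecMulVec_left w x).const_sub A)
  rw [Function.comp_def] at hcomp
  rw [hcomp.fderiv]
  exact map_neg (fderiv 𝕜 W _) (vecMulVec h w)

end Derivative

theorem Matrix.trace_transpose_mul_vecMulVec {R n m : Type*} [CommSemiring R] [Fintype n]
    [Fintype m] (P : Matrix n m R) (h : n → R) (w : m → R) :
    (Pᵀ * vecMulVec h w).trace = h ⬝ᵥ (P *ᵥ w) := by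
  rw [mul_vecMulVec, trace_vecMulVec, dotProduct_mulVec, ← vecMul_transpose, transpose_transpose]

theorem Matrix.transpose_mul_rot_mul {R : Type*} [CommRing R] (A : Matrix (Fin 2) (Fin 2) R) :
    Aᵀ * !![0, -1; 1, 0] * A = A.det • !![0, -1; 1, 0] := by
  rw [eta_fin_two A]
  ext i j
  fin_cases i <;> fin_cases j <;> simp [mul_apply, Fin.sum_univ_two, det_fin_two] <;> ring

theorem Matrix.inv_det_smul_mul_transpose_mulVec_rot {K : Type*} [Field K]
    (A B P : Matrix (Fin 2) (Fin 2) K) (hA : A.det ≠ 0) (e : Fin 2 → K) :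
    ((A * B).det⁻¹ • (P * (A * B)ᵀ)) *ᵥ (!![0, -1; 1, 0] *ᵥ (A *ᵥ e))
      = B.det⁻¹ • (P * Bᵀ) *ᵥ (!![0, -1; 1, 0] *ᵥ e) := by
  have hcof : P * (A * B)ᵀ * !![0, -1; 1, 0] * A = A.det • (P * Bᵀ * !![0, -1; 1, 0]) := by
    rw [transpose_mul, ← Matrix.mul_assoc, Matrix.mul_assoc _ Aᵀ, Matrix.mul_assoc _ (Aᵀ * _),
      transpose_mul_rot_mul, Matrix.mul_smul]
  rw [smul_mulVec, mulVec_mulVec, mulVec_mulVec, hcof, smul_mulVec, ← mulVec_mulVec, smul_smul,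
    det_mul, mul_inv, mul_comm A.det⁻¹, mul_assoc, inv_mul_cancel₀ hA, mul_one]

section EdgeMatrix

variable {R : Type*} [CommRing R]

def edgeMatrix (a b x : Fin 2 → R) : Matrix (Fin 2) (Fin 2) R :=
  of fun i j => (if j = 0 then a i else b i) - x i

theorem edgeMatrix_eq_sub_vecMulVec (a b x : Fin 2 → R) :
    edgeMatrix a b x = edgeMatrix a b 0 - vecMulVec x 1 := by
  ext i j
  simp [edgeMatrix]

theorem edgeMatrix_mul (a b x : Fin 2 → R) (B : Matrix (Fin 2) (Fin 2) R) :
    edgeMatrix a b x * B = edgeMatrix a b 0 * B - vecMulVec x (1 ᵥ* B) := by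
  rw [edgeMatrix_eq_sub_vecMulVec, sub_mul, vecMulVec_mul]

theorem edgeMatrix_mulVec (a b x : Fin 2 → R) : edgeMatrix a b x *ᵥ ![-1, 1] = b - a := by
  ext i
  simp [edgeMatrix, mulVec, dotProduct, Fin.sum_univ_two]

end EdgeMatrix

theorem triangle_nodal_force_formula_general
    (W : Matrix (Fin 2) (Fin 2) ℝ → ℝ)
    (G M P : Matrix (Fin 2) (Fin 2) ℝ)
    (φk φm φp : Fin 2 → ℝ)
    -- deformed edge matrix as a function of the position x of vertex k
    (mOf : (Fin 2 → ℝ) → Matrix (Fin 2) (Fin 2) ℝ)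
    (hmOf : mOf = fun x => Matrix.of fun i j => (if j = 0 then φm i else φp i) - x i)
    (hm : IsUnit (mOf φk).det)
    -- elastic deformation at the current position
    (Fe : Matrix (Fin 2) (Fin 2) ℝ) (hFe : Fe = mOf φk * M⁻¹ * G⁻¹)
    (hW : DifferentiableAt ℝ W Fe)
    -- P represents ∂W/∂F_e via the Frobenius pairing
    (hP : ∀ K : Matrix (Fin 2) (Fin 2) ℝ, fderiv ℝ W Fe K = (Pᵀ * K).trace)
    -- Cauchy stress
    (σ : Matrix (Fin 2) (Fin 2) ℝ) (hσ : σ = (Fe.det)⁻¹ • (P * Feᵀ))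
    -- rotated opposite edge vector
    (vperp : Fin 2 → ℝ)
    (hvperp : vperp = (!![0, -1; 1, 0] : Matrix (Fin 2) (Fin 2) ℝ).mulVec
      (fun i => φp i - φm i)) :
    ∀ h : Fin 2 → ℝ,
      fderiv ℝ (fun x => G.det * W (mOf x * M⁻¹ * G⁻¹) * M.det / 2) φk h
        = (1 / 2) * ∑ i, σ.mulVec vperp i * h i := by
  intro h
  replace hmOf : mOf = edgeMatrix φm φp := hmOf
  subst hmOf
  set B := M⁻¹ * G⁻¹
  have hE : (fun x => G.det * W (edgeMatrix φm φp x * M⁻¹ * G⁻¹) * M.det / 2)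
      = (G.det * M.det / 2) • fun x => W (edgeMatrix φm φp 0 * B - vecMulVec x (1 ᵥ* B)) := by
    funext x
    rw [Matrix.mul_assoc, edgeMatrix_mul, Pi.smul_apply, smul_eq_mul]
    ring
  have hFeB : Fe = edgeMatrix φm φp 0 * B - vecMulVec φk (1 ᵥ* B) := by
    rw [hFe, Matrix.mul_assoc, edgeMatrix_mul]
  have hdetB : B.det⁻¹ = M.det * G.det := by
    rw [det_mul, det_nonsing_inv, det_nonsing_inv, Ring.inverse_eq_inv', mul_inv, inv_inv, inv_inv]
  have hrot : !![0, -1; 1, 0] *ᵥ ![-1, 1] = (-1 : Fin 2 → ℝ) := by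
    ext i
    fin_cases i <;> simp
  have hforce : σ *ᵥ vperp = -((M.det * G.det) • (P *ᵥ (1 ᵥ* B))) := by
    rw [hσ, hvperp, show (fun i => φp i - φm i) = φp - φm from rfl, ← edgeMatrix_mulVec _ _ φk,
      hFe, Matrix.mul_assoc, inv_det_smul_mul_transpose_mulVec_rot _ _ _ hm.ne_zero, hdetB, hrot,
      ← mulVec_mulVec, mulVec_neg, mulVec_neg, mulVec_transpose, smul_neg]
  rw [hE, fderiv_const_smul_field, Pi.smul_apply, FunLike.coe_smul, Pi.smul_apply, smul_eq_mul,
    fderiv_comp_sub_vecMulVec _ _ _ _ _ (hFeB ▸ hW), ← hFeB, hP, trace_transpose_mul_vecMulVec]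
  change _ = 1 / 2 * ((σ *ᵥ vperp) ⬝ᵥ h)
  rw [hforce, neg_dotProduct, smul_dotProduct, dotProduct_comm, smul_eq_mul]
  ring

/-- Uniform-strain triangle nodal force formula: for the element energy
E(φᵏ) = det(G)·W(m M⁻¹ G⁻¹)·(det M)/2, where m is the deformed edge matrix and M the
reference edge matrix, the derivative with respect to the vertex φᵏ is
(1/2)·σ·φ^{k⊥}, i.e. the nodal force is -(1/2)·σ·φ^{k⊥}, with σ the Cauchy stress and
φ^{k⊥} the 90°-counterclockwise rotation of the opposite deformed edge vector. -/
theorem triangle_nodal_force_formula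
    (W : Matrix (Fin 2) (Fin 2) ℝ → ℝ)
    (G M P : Matrix (Fin 2) (Fin 2) ℝ)
    (φk φm φp : Fin 2 → ℝ)
    -- deformed edge matrix as a function of the position x of vertex k
    (mOf : (Fin 2 → ℝ) → Matrix (Fin 2) (Fin 2) ℝ)
    (hmOf : mOf = fun x => Matrix.of fun i j => (if j = 0 then φm i else φp i) - x i)
    (hG : IsUnit G.det) (hM : IsUnit M.det) (hm : IsUnit (mOf φk).det)
    -- elastic deformation at the current position
    (Fe : Matrix (Fin 2) (Fin 2) ℝ) (hFe : Fe = mOf φk * M⁻¹ * G⁻¹)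
    (hFedet : 0 < Fe.det)
    (hW : DifferentiableAt ℝ W Fe)
    -- P represents ∂W/∂F_e via the Frobenius pairing
    (hP : ∀ K : Matrix (Fin 2) (Fin 2) ℝ, fderiv ℝ W Fe K = (Pᵀ * K).trace)
    -- Cauchy stress
    (σ : Matrix (Fin 2) (Fin 2) ℝ) (hσ : σ = (Fe.det)⁻¹ • (P * Feᵀ))
    -- rotated opposite edge vector
    (vperp : Fin 2 → ℝ)
    (hvperp : vperp = (!![0, -1; 1, 0] : Matrix (Fin 2) (Fin 2) ℝ).mulVec
      (fun i => φp i - φm i)) :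
    ∀ h : Fin 2 → ℝ,
      fderiv ℝ (fun x => G.det * W (mOf x * M⁻¹ * G⁻¹) * M.det / 2) φk h
        = (1 / 2) * ∑ i, σ.mulVec vperp i * h i :=
  triangle_nodal_force_formula_general W G M P φk φm φp mOf hmOf hm Fe hFe hW hP σ hσ vperp hvperp
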